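/- arXiv:0806.0805 — 2 statements merged into one kernel-verified Lean document; each statement's English description precedes it below -/
import Mathlib

section
/- (Theorem 1) For every integer k ≥ 1 and every n ∈ ℤ, ∑_{j=0}^{k+1} (−1)^{binom(j+1,2)} · s^{binom(j,2)} · q^{j(j−1)(2j−1)/6} · ⟨k+1, j⟩(x,s,q) · f(n−j, x, q^j·s)^k = 0, provided all factors appearing in the denominators of the q-fibonomial coefficients ⟨k+1, j⟩(x,s,q), 0 ≤ j ≤ k+1, are nonzero. (Here j(j−1)(2j−1)/6 = ∑_{i=0}^{j−1} i^2.) -/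
open Finset

variable {K : Type*} [Field K]

noncomputable def qFibPos (q x t : K) : ℕ → K
  | 0 => 0
  | 1 => 1
  | n + 2 => x * qFibPos q x t (n + 1) + q ^ n * t * qFibPos q x t n

noncomputable def qFibNeg (q x t : K) : ℕ → K
  | 0 => 0
  | 1 => q / t
  | m + 2 => (qFibNeg q x t m - x * qFibNeg q x t (m + 1)) * q ^ (m + 2) / t

/-- The Carlitz q-Fibonacci polynomial `f(n, x, t)` for `n : ℤ`, defined by `f 0 = 0`,
`f 1 = 1` and `f n = x * f (n-1) + q^(n-2) * t * f (n-2)`, solved backwards for `n < 0`. -/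
noncomputable def qFib (q x t : K) : ℤ → K
  | Int.ofNat n => qFibPos q x t n
  | Int.negSucc m => qFibNeg q x t (m + 1)

/-- The q-analog of the fibonomial coefficient
`⟨k, j⟩(x,s,q) = (∏_{i=1}^{k} f(i,x,s)) / (∏_{i=1}^{j} f(i,x,q^{j-i}s) · ∏_{i=1}^{k-j} f(i,x,q^j s))`. -/
noncomputable def qFibonomial (q x s : K) (k j : ℕ) : K :=
  (∏ i ∈ Finset.range k, qFib q x s (i + 1)) /
    ((∏ i ∈ Finset.range j, qFib q x (q ^ (j - (i + 1)) * s) (i + 1)) *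
      (∏ i ∈ Finset.range (k - j), qFib q x (q ^ j * s) (i + 1)))


/-!
Write `U j = f(-j, q^j s)` and `V j = f(1 - j, q^j s)`. For every `m`, the sequence
`j ↦ f(m - j, q^j s)` obeys the same second-order recurrence in `j` as `U` and `V`, so it is a
combination `α U + β V`, and its `k`-th power is a combination of the sequences `U^a V^(k-a)`,
`a ≤ k`. It therefore suffices that the coefficients of the theorem annihilate each of these.
The `k + 2` vectors `(U_j^a V_j^(k-a))_a` of `K^(k+1)` satisfy the Laplace relation whose
coefficients are the signed maximal minors, and these are homogeneous Vandermonde determinants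
`∏ (U_b V_a - U_a V_b)`. A reflection formula `f(-b, q^b s) = ± f(b, s) / (q^C(b,2) s^b)` turns
each factor `U_b V_a - U_a V_b` into `f(b - a, q^a s)` times a monomial depending on `b` only, and
then the minor obtained by deleting column `j` is, up to a factor independent of `j`, the `j`-th
coefficient of the theorem.
-/

theorem Matrix.sum_neg_one_pow_mul_det_submatrix_succAbove {R : Type*} [CommRing R] {n : ℕ}
    (M : Matrix (Fin (n + 1)) (Fin n) R) (c : Fin n) :
    ∑ i : Fin (n + 1), (-1) ^ (i : ℕ) * M i c * (M.submatrix i.succAbove id).det = 0 := by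
  let A : Matrix (Fin (n + 1)) (Fin (n + 1)) R := .of fun i => Fin.cons (M i c) (M i)
  have hA : A.det = 0 :=
    Matrix.det_zero_of_column_eq (Fin.succ_ne_zero c).symm fun i => by simp [A]
  have hminor (i : Fin (n + 1)) :
      A.submatrix i.succAbove Fin.succ = M.submatrix i.succAbove id := by
    ext; simp [A]
  simpa [Matrix.det_succ_column_zero, hminor, A] using hA

theorem Matrix.sum_rectVandermonde_mul_det_projVandermonde_succAbove {R : Type*} [CommRing R]
    {n : ℕ} (u v : Fin (n + 1) → R) (c : Fin n) :
    ∑ p : Fin (n + 1), (-1) ^ (p : ℕ) * Matrix.rectVandermonde u v n p c *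
      (Matrix.projVandermonde (u ∘ p.succAbove) (v ∘ p.succAbove)).det = 0 :=
  Matrix.sum_neg_one_pow_mul_det_submatrix_succAbove _ c

theorem Fin.prod_Ioi_eq_mul_prod_succAbove {M : Type*} [CommMonoid M] {n : ℕ}
    (F : Fin (n + 1) → Fin (n + 1) → M) (p : Fin (n + 1)) :
    ∏ a, ∏ b ∈ Ioi a, F a b = (∏ a ∈ Iio p, F a p) * (∏ b ∈ Ioi p, F p b) *
      ∏ r : Fin n, ∏ r' ∈ Ioi r, F (p.succAbove r) (p.succAbove r') := by
  have hIoi {m : ℕ} (a : Fin m) (G : Fin m → M) :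
      ∏ b ∈ Ioi a, G b = ∏ b, if a < b then G b else 1 := by
    rw [← prod_filter]; congr 1; ext; simp
  have hIio {m : ℕ} (a : Fin m) (G : Fin m → M) :
      ∏ b ∈ Iio a, G b = ∏ b, if b < a then G b else 1 := by
    rw [← prod_filter]; congr 1; ext; simp
  simp only [hIoi, hIio, Fin.prod_univ_succAbove _ p, lt_self_iff_false, if_false, one_mul,
    Fin.succAbove_lt_succAbove_iff, prod_mul_distrib]
  ac_rfl

theorem Fin.prod_Iio_val {M : Type*} [CommMonoid M] {n : ℕ} (f : ℕ → M) (p : Fin n) :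
    ∏ a ∈ Iio p, f a = ∏ a ∈ range p, f a := by
  rw [← Nat.Iio_eq_range, ← Fin.map_valEmbedding_Iio, prod_map]
  rfl

theorem Fin.prod_Ioi_val {M : Type*} [CommMonoid M] {n : ℕ} (f : ℕ → M) (p : Fin n) :
    ∏ b ∈ Ioi p, f b = ∏ b ∈ Ioo (p : ℕ) n, f b := by
  rw [← Fin.map_valEmbedding_Ioi, prod_map]
  rfl

theorem sum_mul_add_pow_eq_zero {R ι : Type*} [CommSemiring R] (S : Finset ι) (c u v : ι → R)
    (k : ℕ) (h : ∀ a ≤ k, ∑ i ∈ S, c i * (u i ^ a * v i ^ (k - a)) = 0) (α β : R) :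
    ∑ i ∈ S, c i * (α * u i + β * v i) ^ k = 0 := by
  simp only [add_pow, mul_sum, mul_pow]
  rw [sum_comm]
  refine sum_eq_zero fun a ha => ?_
  have hzero := congrArg (α ^ a * β ^ (k - a) * (k.choose a : R) * ·)
    (h a (Nat.lt_succ_iff.mp (mem_range.mp ha)))
  simp only [mul_zero, mul_sum] at hzero
  rw [← hzero]
  exact sum_congr rfl fun i _ => by ring

def IsCarlitzSeq (q x t : K) (φ : ℤ → K) : Prop :=
  ∀ n : ℤ, φ (n + 2) = x * φ (n + 1) + q ^ n * t * φ n

namespace IsCarlitzSeq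

variable {q x t : K} {φ ψ : ℤ → K}

theorem linear_comb (hφ : IsCarlitzSeq q x t φ) (hψ : IsCarlitzSeq q x t ψ) (α β : K) :
    IsCarlitzSeq q x t (fun n => α * φ n + β * ψ n) := fun n => by
  linear_combination α * hφ n + β * hψ n

theorem eq_of_eq_init (hq : q ≠ 0) (ht : t ≠ 0) (hφ : IsCarlitzSeq q x t φ)
    (hψ : IsCarlitzSeq q x t ψ) (h0 : φ 0 = ψ 0) (h1 : φ 1 = ψ 1) : φ = ψ := by
  suffices h : ∀ n : ℤ, φ n = ψ n ∧ φ (n + 1) = ψ (n + 1) from funext fun n => (h n).1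
  intro n
  induction n using Int.induction_on with
  | zero => exact ⟨h0, by simpa using h1⟩
  | succ i ih =>
    refine ⟨ih.2, ?_⟩
    rw [add_assoc, one_add_one_eq_two, hφ, hψ, ih.1, ih.2]
  | pred i ih =>
    rw [sub_add_cancel]
    refine ⟨?_, ih.1⟩
    have hφi := hφ (-i - 1)
    have hψi := hψ (-i - 1)
    rw [show -(i : ℤ) - 1 + 2 = -i + 1 by ring, sub_add_cancel, ih.1, ih.2] at hφi
    rw [show -(i : ℤ) - 1 + 2 = -i + 1 by ring, sub_add_cancel] at hψi
    have hc : q ^ (-(i : ℤ) - 1) * t ≠ 0 := mul_ne_zero (zpow_ne_zero _ hq) ht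
    exact mul_left_cancel₀ hc (by linear_combination hψi - hφi)

end IsCarlitzSeq

section
variable {q x t : K}

@[simp] theorem qFib_zero : qFib q x t 0 = 0 := rfl
@[simp] theorem qFib_one : qFib q x t 1 = 1 := rfl
@[simp] theorem qFib_neg_one : qFib q x t (-1) = q / t := rfl
@[simp] theorem qFib_neg_two : qFib q x t (-2) = -(x * (q / t)) * q ^ 2 / t := by
  change (0 - x * (q / t)) * q ^ 2 / t = _
  rw [zero_sub]

theorem isCarlitzSeq_qFib (hq : q ≠ 0) (ht : t ≠ 0) : IsCarlitzSeq q x t (qFib q x t) := by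
  intro n
  cases n with
  | ofNat m =>
    change qFibPos q x t (m + 2) =
      x * qFibPos q x t (m + 1) + q ^ (m : ℤ) * t * qFibPos q x t m
    rw [zpow_natCast, qFibPos]
  | negSucc m =>
    match m with
    | 0 =>
      change (1 : K) = x * 0 + q ^ (-1 : ℤ) * t * (q / t)
      field_simp
      ring
    | 1 =>
      change (0 : K) = x * (q / t) + q ^ (-2 : ℤ) * t * ((0 - x * (q / t)) * q ^ 2 / t)
      field_simp
      ring
    | m + 2 =>
      change qFibNeg q x t (m + 1) = x * qFibNeg q x t (m + 2) + q ^ (Int.negSucc (m + 2)) * t *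
        ((qFibNeg q x t (m + 1) - x * qFibNeg q x t (m + 2)) * q ^ (m + 3) / t)
      rw [zpow_negSucc]
      field_simp
      ring

theorem isCarlitzSeq_qFib_sub (hq : q ≠ 0) (ht : t ≠ 0) (r : ℕ) :
    IsCarlitzSeq q x t (fun n => qFib q x (q ^ r * t) (n - r)) := fun n => by
  have h := isCarlitzSeq_qFib (x := x) hq (mul_ne_zero (pow_ne_zero r hq) ht) (n - r)
  have hc : q ^ (n - r) * (q ^ r * t) = q ^ n * t := by
    rw [← mul_assoc, ← zpow_natCast, ← zpow_add₀ hq, sub_add_cancel]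
  rw [hc] at h
  simp only [sub_add_eq_add_sub] at h ⊢
  exact h

theorem qFib_eq_param_shift (hq : q ≠ 0) (ht : t ≠ 0) (n : ℤ) :
    qFib q x t n = x * qFib q x (q * t) (n - 1) + q * t * qFib q x (q ^ 2 * t) (n - 2) := by
  have h := (isCarlitzSeq_qFib_sub (x := x) hq ht 1).linear_comb
    (isCarlitzSeq_qFib_sub hq ht 2) x (q * t)
  simp only [pow_one, Nat.cast_one, Nat.cast_ofNat] at h
  refine congrFun (IsCarlitzSeq.eq_of_eq_init hq ht (isCarlitzSeq_qFib hq ht) h ?_ ?_) n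
  · simp only [qFib_zero, zero_sub, Int.reduceNeg, qFib_neg_one, qFib_neg_two]
    field_simp
    ring
  · simp only [qFib_one, sub_self, qFib_zero, Int.reduceSub, qFib_neg_one]
    field_simp
    ring

end

noncomputable def qFibShift (q x s : K) (m : ℤ) (j : ℕ) : K := qFib q x (q ^ j * s) (m - j)

def reflFactor (q s : K) (b : ℕ) : K := (-1) ^ (b + 1) * q ^ b.choose 2 * s ^ b

noncomputable def qFibCasoratian (q x s : K) (a b : ℕ) : K :=
  qFibShift q x s 0 b * qFibShift q x s 1 a - qFibShift q x s 0 a * qFibShift q x s 1 b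

def qFibPowCoeff (q s : K) (j : ℕ) : K :=
  (-1) ^ ((j + 1).choose 2) * s ^ j.choose 2 * q ^ (∑ i ∈ range j, i ^ 2)

section
variable {q x s : K}

theorem qFibShift_rec (hq : q ≠ 0) (hs : s ≠ 0) (m : ℤ) (j : ℕ) :
    qFibShift q x s m j =
      x * qFibShift q x s m (j + 1) + q ^ (j + 1) * s * qFibShift q x s m (j + 2) := by
  have h := qFib_eq_param_shift (x := x) hq (mul_ne_zero (pow_ne_zero j hq) hs) (m - j)
  rw [← mul_assoc, ← pow_succ', ← mul_assoc, ← pow_add, sub_sub, sub_sub] at h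
  simp only [qFibShift]
  push_cast
  rwa [add_comm 2 j] at h

theorem qFibShift_eq_combination (hq : q ≠ 0) (hs : s ≠ 0) (m : ℤ) (j : ℕ) :
    qFibShift q x s m j =
      s * qFibShift q x s 0 j * qFib q x (q * s) (m - 1) + qFibShift q x s 1 j * qFib q x s m := by
  have h := (isCarlitzSeq_qFib_sub (x := x) hq hs 1).linear_comb
    (isCarlitzSeq_qFib hq hs) (s * qFibShift q x s 0 j) (qFibShift q x s 1 j)
  simp only [pow_one, Nat.cast_one] at h
  refine congrFun (IsCarlitzSeq.eq_of_eq_init hq hs (isCarlitzSeq_qFib_sub hq hs j) h ?_ ?_) m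
  · simp only [qFibShift, zero_sub, Int.reduceNeg, qFib_neg_one, qFib_zero]
    field_simp
    ring
  · simp [qFibShift]

theorem reflFactor_succ (b : ℕ) : reflFactor q s (b + 1) = -(q ^ b * s) * reflFactor q s b := by
  simp only [reflFactor, Nat.choose_succ_succ', Nat.choose_one_right, pow_succ, pow_add]
  ring

theorem reflFactor_ne_zero (hq : q ≠ 0) (hs : s ≠ 0) (b : ℕ) : reflFactor q s b ≠ 0 := by
  unfold reflFactor
  exact mul_ne_zero (mul_ne_zero (pow_ne_zero _ (neg_ne_zero.mpr one_ne_zero))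
    (pow_ne_zero _ hq)) (pow_ne_zero _ hs)

theorem reflFactor_mul_qFibShift_zero (hq : q ≠ 0) (hs : s ≠ 0) :
    ∀ b : ℕ, reflFactor q s b * qFibShift q x s 0 b = qFib q x s b
  | 0 => by simp [qFibShift]
  | 1 => by
    change (-1) ^ 2 * q ^ 0 * s ^ 1 * qFib q x (q ^ 1 * s) (-1) = 1
    rw [qFib_neg_one]
    field_simp
  | b + 2 => by
    have ih₀ := reflFactor_mul_qFibShift_zero hq hs b
    have ih₁ := reflFactor_mul_qFibShift_zero hq hs (b + 1)
    have hU := qFibShift_rec (x := x) hq hs 0 b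
    have hf := isCarlitzSeq_qFib (x := x) hq hs b
    have hw₁ := reflFactor_succ (q := q) (s := s) b
    have hw₂ := reflFactor_succ (q := q) (s := s) (b + 1)
    push_cast at ih₁ ⊢
    rw [zpow_natCast] at hf
    linear_combination qFibShift q x s 0 (b + 2) * hw₂ + reflFactor q s (b + 1) * hU + x * ih₁
      - qFibShift q x s 0 b * hw₁ + q ^ b * s * ih₀ - hf

theorem reflFactor_mul_qFibShift_one (hq : q ≠ 0) (hs : s ≠ 0) :
    ∀ b : ℕ, reflFactor q s b * qFibShift q x s 1 b = -(s * qFib q x (q * s) (b - 1))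
  | 0 => by
    change (-1) ^ 1 * q ^ 0 * s ^ 0 * qFib q x (q ^ 0 * s) 1 = -(s * qFib q x (q * s) (-1))
    rw [qFib_one, qFib_neg_one]
    field_simp
  | c + 1 => by
    have hU : qFibShift q x s 1 (c + 1) = qFibShift q x (q * s) 0 c := by
      simp only [qFibShift, pow_succ, mul_assoc]
      push_cast
      ring_nf
    have hw : reflFactor q s (c + 1) = -s * reflFactor q (q * s) c := by
      simp only [reflFactor, Nat.choose_succ_succ', Nat.choose_one_right, pow_succ, pow_add,
        mul_pow]
      ring
    rw [hU, hw, mul_assoc, reflFactor_mul_qFibShift_zero hq (mul_ne_zero hq hs)]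
    push_cast
    ring_nf

theorem reflFactor_mul_qFibCasoratian (hq : q ≠ 0) (hs : s ≠ 0) (a b : ℕ) :
    reflFactor q s b * qFibCasoratian q x s a b = qFibShift q x s b a := by
  unfold qFibCasoratian
  linear_combination qFibShift q x s 1 a * reflFactor_mul_qFibShift_zero (x := x) hq hs b
    - qFibShift q x s 0 a * reflFactor_mul_qFibShift_one (x := x) hq hs b
    - qFibShift_eq_combination (x := x) hq hs b a

theorem qFibPowCoeff_mul_prod_reflFactor (p : ℕ) :
    qFibPowCoeff q s p * ∏ b ∈ range (p + 1), reflFactor q s b =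
      -(-1) ^ p * reflFactor q s p ^ p := by
  induction p with
  | zero => simp [qFibPowCoeff, reflFactor]
  | succ p ih =>
    have hc (m : ℕ) : (m + 1).choose 2 = m.choose 2 + m := by
      rw [Nat.choose_succ_succ', Nat.choose_one_right, add_comm]
    unfold qFibPowCoeff at ih ⊢
    rw [prod_range_succ, reflFactor_succ, hc (p + 1), pow_add (-1 : K),
      show s ^ (p + 1).choose 2 = s ^ p.choose 2 * s ^ p by rw [hc, pow_add],
      sum_range_succ, sq p, pow_add q, pow_mul]
    linear_combination (-1) ^ (p + 1) * s ^ p * (q ^ p) ^ p * (-(q ^ p * s) * reflFactor q s p) * ih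

theorem qFibonomial_eq_div (k p : ℕ) :
    qFibonomial q x s k p = (∏ i ∈ range k, qFib q x s (i + 1)) /
      ((∏ a ∈ range p, qFibShift q x s p a) *
        ∏ b ∈ Ioo p (k + 1), qFibShift q x s b p) := by
  unfold qFibonomial
  congr 2
  · rw [← prod_range_reflect (qFibShift q x s p)]
    refine prod_congr rfl fun i hi => ?_
    have hip := mem_range.mp hi
    rw [qFibShift, show p - (i + 1) = p - 1 - i by omega,
      show ((i : ℤ) + 1) = p - ((p - 1 - i : ℕ) : ℤ) by omega]
  · rw [← Finset.Ico_add_one_left_eq_Ioo, prod_Ico_eq_prod_range, Nat.add_sub_add_right]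
    refine prod_congr rfl fun i _ => ?_
    simp only [qFibShift]
    push_cast
    ring_nf

theorem qFibPowCoeff_mul_qFibonomial_mul_prod (hq : q ≠ 0) (hs : s ≠ 0) {k : ℕ}
    (hg : ∀ a b : ℕ, a < b → b ≤ k + 1 → qFibShift q x s b a ≠ 0) (p : Fin (k + 2)) :
    qFibPowCoeff q s p * qFibonomial q x s (k + 1) p *
        ((∏ b ∈ range (k + 2), reflFactor q s b) *
          ∏ a : Fin (k + 2), ∏ b ∈ Ioi a, qFibCasoratian q x s a b) =
      -(∏ i ∈ range (k + 1), qFib q x s (i + 1)) * ((-1) ^ (p : ℕ) *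
        ∏ r : Fin (k + 1), ∏ r' ∈ Ioi r,
          qFibCasoratian q x s (p.succAbove r) (p.succAbove r')) := by
  set den :=
    (∏ a ∈ range p, qFibShift q x s p a) * ∏ b ∈ Ioo (p : ℕ) (k + 2), qFibShift q x s b p
  have hden_ne : den ≠ 0 := by
    refine mul_ne_zero (prod_ne_zero_iff.mpr fun a ha => hg _ _ (mem_range.mp ha) (by omega))
      (prod_ne_zero_iff.mpr fun b hb => ?_)
    rw [mem_Ioo] at hb
    exact hg _ _ hb.1 (by omega)
  have hfib : qFibonomial q x s (k + 1) p * den = ∏ i ∈ range (k + 1), qFib q x s (i + 1) := by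
    rw [qFibonomial_eq_div]
    exact div_mul_cancel₀ _ hden_ne
  have hcoeff : qFibPowCoeff q s p * ∏ b ∈ range (k + 2), reflFactor q s b =
      -(-1) ^ (p : ℕ) * reflFactor q s p ^ (p : ℕ) *
        ∏ b ∈ Ioo (p : ℕ) (k + 2), reflFactor q s b := by
    rw [← prod_range_mul_prod_Ico _ (by omega : (p : ℕ) + 1 ≤ k + 2),
      Finset.Ico_add_one_left_eq_Ioo, ← mul_assoc, qFibPowCoeff_mul_prod_reflFactor]
  have hden : reflFactor q s p ^ (p : ℕ) * (∏ b ∈ Ioo (p : ℕ) (k + 2), reflFactor q s b) *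
      ((∏ a ∈ Iio p, qFibCasoratian q x s a p) * ∏ b ∈ Ioi p, qFibCasoratian q x s p b) =
        den := by
    have hpow : reflFactor q s p ^ (p : ℕ) * ∏ a ∈ range p, qFibCasoratian q x s a p =
        ∏ a ∈ range p, reflFactor q s p * qFibCasoratian q x s a p := by
      rw [prod_mul_distrib, prod_const, card_range]
    rw [Fin.prod_Iio_val (qFibCasoratian q x s · p), Fin.prod_Ioi_val (qFibCasoratian q x s p ·),
      mul_mul_mul_comm, hpow, ← prod_mul_distrib]
    simp only [reflFactor_mul_qFibCasoratian hq hs, den]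
  set minor := ∏ r : Fin (k + 1), ∏ r' ∈ Ioi r,
    qFibCasoratian q x s (p.succAbove r) (p.succAbove r')
  rw [Fin.prod_Ioi_eq_mul_prod_succAbove (fun a b => qFibCasoratian q x s a b) p]
  linear_combination
    (qFibonomial q x s (k + 1) p * ((∏ a ∈ Iio p, qFibCasoratian q x s a p) *
      ∏ b ∈ Ioi p, qFibCasoratian q x s p b) * minor) * hcoeff
    - ((-1) ^ (p : ℕ) * qFibonomial q x s (k + 1) p * minor) * hden
    - ((-1) ^ (p : ℕ) * minor) * hfib

theorem sum_qFibPowCoeff_mul_qFibonomial_mul_pow (hq : q ≠ 0) (hs : s ≠ 0) {k : ℕ}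
    (hg : ∀ a b : ℕ, a < b → b ≤ k + 1 → qFibShift q x s b a ≠ 0) (a : ℕ)
    (ha : a ≤ k) :
    ∑ j ∈ range (k + 2), qFibPowCoeff q s j * qFibonomial q x s (k + 1) j *
      (qFibShift q x s 0 j ^ a * qFibShift q x s 1 j ^ (k - a)) = 0 := by
  have hlaplace := Matrix.sum_rectVandermonde_mul_det_projVandermonde_succAbove
    (fun p : Fin (k + 2) => qFibShift q x s 0 p) (fun p => qFibShift q x s 1 p) ⟨a, by omega⟩
  simp only [Matrix.det_projVandermonde, Matrix.rectVandermonde_apply, Function.comp_apply,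
    Fin.val_rev, show k + 1 - (a + 1) = k - a by omega] at hlaplace
  have hne : (∏ b ∈ range (k + 2), reflFactor q s b) *
      ∏ a : Fin (k + 2), ∏ b ∈ Ioi a, qFibCasoratian q x s a b ≠ 0 := by
    refine mul_ne_zero (prod_ne_zero_iff.mpr fun b _ => reflFactor_ne_zero hq hs b)
      (prod_ne_zero_iff.mpr fun a _ => prod_ne_zero_iff.mpr fun b hb => ?_)
    refine right_ne_zero_of_mul ((reflFactor_mul_qFibCasoratian hq hs a b).trans_ne ?_)
    exact hg a b (Fin.lt_def.mp (mem_Ioi.mp hb)) (by omega)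
  apply mul_right_cancel₀ hne
  rw [zero_mul, sum_mul, ← Fin.sum_univ_eq_sum_range (fun j => _ * _ * _ * _) (k + 2)]
  have hterm (p : Fin (k + 2)) :
      qFibPowCoeff q s p * qFibonomial q x s (k + 1) p *
        (qFibShift q x s 0 p ^ a * qFibShift q x s 1 p ^ (k - a)) *
        ((∏ b ∈ range (k + 2), reflFactor q s b) *
          ∏ a : Fin (k + 2), ∏ b ∈ Ioi a, qFibCasoratian q x s a b) =
      -(∏ i ∈ range (k + 1), qFib q x s (i + 1)) *
        ((-1) ^ (p : ℕ) * (qFibShift q x s 0 p ^ a * qFibShift q x s 1 p ^ (k - a)) *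
          ∏ r : Fin (k + 1), ∏ r' ∈ Ioi r,
            qFibCasoratian q x s (p.succAbove r) (p.succAbove r')) := by
    rw [mul_right_comm, qFibPowCoeff_mul_qFibonomial_mul_prod hq hs hg p]
    ring
  rw [sum_congr rfl fun p _ => hterm p, ← mul_sum]
  exact mul_eq_zero_of_right _ hlaplace

end

theorem qFib_pow_recurrence_general (q x s : K) (hq : q ≠ 0) (hs : s ≠ 0)
    (k : ℕ) (n : ℤ)
    (hden : ∀ j ≤ k + 1,
      (∀ i, 1 ≤ i → i ≤ j → qFib q x (q ^ (j - i) * s) (i : ℤ) ≠ 0) ∧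
      (∀ i, 1 ≤ i → i ≤ k + 1 - j → qFib q x (q ^ j * s) (i : ℤ) ≠ 0)) :
    ∑ j ∈ Finset.range (k + 2),
      (-1 : K) ^ ((j + 1).choose 2) * s ^ (j.choose 2) *
        q ^ (∑ i ∈ Finset.range j, i ^ 2) *
        qFibonomial q x s (k + 1) j * qFib q x (q ^ j * s) (n - j) ^ k = 0 := by
  have hg (a b : ℕ) (hab : a < b) (hb : b ≤ k + 1) : qFibShift q x s b a ≠ 0 := by
    have h := (hden a (by omega)).2 (b - a) (by omega) (by omega)
    rwa [qFibShift, show (b : ℤ) - a = ((b - a : ℕ) : ℤ) by omega]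
  have hexpand (j : ℕ) : qFib q x (q ^ j * s) (n - j) =
      s * qFib q x (q * s) (n - 1) * qFibShift q x s 0 j + qFib q x s n * qFibShift q x s 1 j := by
    rw [← qFibShift, qFibShift_eq_combination hq hs]
    ring
  simp only [hexpand]
  exact sum_mul_add_pow_eq_zero _ (fun j => qFibPowCoeff q s j * qFibonomial q x s (k + 1) j) _ _ k
    (sum_qFibPowCoeff_mul_qFibonomial_mul_pow hq hs hg) _ _

theorem qFib_pow_recurrence (q x s : K) (hq : q ≠ 0) (hs : s ≠ 0)
    (k : ℕ) (hk : 1 ≤ k) (n : ℤ)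
    (hden : ∀ j ≤ k + 1,
      (∀ i, 1 ≤ i → i ≤ j → qFib q x (q ^ (j - i) * s) (i : ℤ) ≠ 0) ∧
      (∀ i, 1 ≤ i → i ≤ k + 1 - j → qFib q x (q ^ j * s) (i : ℤ) ≠ 0)) :
    ∑ j ∈ Finset.range (k + 2),
      (-1 : K) ^ ((j + 1).choose 2) * s ^ (j.choose 2) *
        q ^ (∑ i ∈ Finset.range j, i ^ 2) *
        qFibonomial q x s (k + 1) j * qFib q x (q ^ j * s) (n - j) ^ k = 0 :=
  qFib_pow_recurrence_general q x s hq hs k n hden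
end

section
/- For every integer k ≥ 1 and every n ∈ ℤ, the (k+2)×(k+2) determinant det( f(n+i−j, x, q^j·s)^k )_{i,j=0}^{k+1} is zero. -/
/-!
For fixed `j`, the column `i ↦ f(n + i - j, x, q^j s)` satisfies the recurrence
`g (i + 2) = x g (i + 1) + q^(n + i) s g i`, whose coefficients do not depend on `j`: the shift
of the argument by `-j` is compensated by the factor `q^j` in the parameter. Hence every column is
a combination `a_j A + b_j B` of two fixed fundamental solutions, and its `k`-th power lies in the
span of the `k + 1` sequences `A^m B^(k-m)`. So the `k + 2` columns are linearly dependent.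
-/

open Finset

variable {K : Type*} [Field K]

namespace Matrix

theorem det_mul_eq_zero_of_card_lt {m n : Type*} [Fintype m] [DecidableEq m] [Fintype n]
    (P : Matrix m n K) (Q : Matrix n m K) (h : Fintype.card n < Fintype.card m) :
    (P * Q).det = 0 := by
  by_contra hdet
  have hrank : (P * Q).rank = Fintype.card m :=
    rank_of_isUnit _ ((isUnit_iff_isUnit_det _).2 (isUnit_iff_ne_zero.2 hdet))
  have := (rank_mul_le_left P Q).trans P.rank_le_card_width
  omega

/-- The entries are binomial forms of degree `k` in `(a j, b j)`, so the matrix factors through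
the `k + 1` monomials `A i ^ m * B i ^ (k - m)`. -/
theorem det_of_add_mul_pow_eq_zero {m : Type*} [Fintype m] [DecidableEq m] {k : ℕ}
    (hk : k + 1 < Fintype.card m) (A B a b : m → K) :
    (of fun i j => (a j * A i + b j * B i) ^ k).det = 0 := by
  let P : Matrix m (Fin (k + 1)) K := of fun i l => A i ^ (l : ℕ) * B i ^ (k - l)
  let Q : Matrix (Fin (k + 1)) m K := of fun l j => a j ^ (l : ℕ) * b j ^ (k - l) * k.choose l
  have hPQ : of (fun i j => (a j * A i + b j * B i) ^ k) = P * Q := by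
    ext i j
    rw [of_apply, add_pow, ← Fin.sum_univ_eq_sum_range, mul_apply]
    refine Finset.sum_congr rfl fun l _ => ?_
    simp only [P, Q, of_apply]
    ring
  rw [hPQ]
  exact det_mul_eq_zero_of_card_lt P Q (by simpa using hk)

end Matrix

section SecondOrderRecurrence

variable {R : Type*} [CommSemiring R]

def linRec2 (d c : ℕ → R) (a b : R) : ℕ → R
  | 0 => a
  | 1 => b
  | i + 2 => d i * linRec2 d c a b (i + 1) + c i * linRec2 d c a b i

theorem eq_linRec2_of_rec {d c g : ℕ → R} (hg : ∀ i, g (i + 2) = d i * g (i + 1) + c i * g i)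
    (i : ℕ) : g i = g 0 * linRec2 d c 1 0 i + g 1 * linRec2 d c 0 1 i := by
  induction i using Nat.twoStepInduction with
  | zero => simp [linRec2]
  | one => simp [linRec2]
  | more i ih₀ ih₁ =>
    rw [hg, ih₀, ih₁, linRec2, linRec2]
    ring

end SecondOrderRecurrence

section qFib

variable {q x t : K}

theorem qFib_natCast (a : ℕ) : qFib q x t a = qFibPos q x t a := rfl

theorem qFib_neg_natCast (a : ℕ) : qFib q x t (-a) = qFibNeg q x t a := by
  cases a <;> rfl

theorem qFib_add_two (hq : q ≠ 0) (ht : t ≠ 0) (m : ℤ) :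
    qFib q x t (m + 2) = x * qFib q x t (m + 1) + q ^ m * t * qFib q x t m := by
  rcases m with a | _ | b
  · have h₂ : (a : ℤ) + 2 = ((a + 2 : ℕ) : ℤ) := by push_cast; ring
    have h₁ : (a : ℤ) + 1 = ((a + 1 : ℕ) : ℤ) := by push_cast; ring
    rw [Int.ofNat_eq_natCast, h₂, h₁, qFib_natCast, qFib_natCast, qFib_natCast, zpow_natCast]
    rfl
  · change (1 : K) = x * 0 + q ^ (-1 : ℤ) * t * (q / t)
    field_simp
    simp
  · have h₂ : Int.negSucc (b + 1) + 2 = -(b : ℤ) := by rw [Int.negSucc_eq]; push_cast; ring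
    have h₁ : Int.negSucc (b + 1) + 1 = -((b + 1 : ℕ) : ℤ) := by
      rw [Int.negSucc_eq]; push_cast; ring
    have h₀ : Int.negSucc (b + 1) = -((b + 2 : ℕ) : ℤ) := by rw [Int.negSucc_eq]; push_cast; ring
    rw [h₂, h₁, h₀, qFib_neg_natCast, qFib_neg_natCast, qFib_neg_natCast, qFibNeg, zpow_neg,
      zpow_natCast]
    field_simp
    ring

theorem qFib_shift_add_two (hq : q ≠ 0) (s : K) (hs : s ≠ 0) (n : ℤ) (j i : ℕ) :
    qFib q x (q ^ j * s) (n + (i + 2 : ℕ) - j) =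
      x * qFib q x (q ^ j * s) (n + (i + 1 : ℕ) - j) +
        q ^ (n + i) * s * qFib q x (q ^ j * s) (n + i - j) := by
  have hcoeff : q ^ (n + i - j) * (q ^ j * s) = q ^ (n + i) * s := by
    rw [← mul_assoc, ← zpow_natCast q j, ← zpow_add₀ hq, sub_add_cancel]
  have h₂ : n + (i + 2 : ℕ) - j = n + i - j + 2 := by push_cast; ring
  have h₁ : n + (i + 1 : ℕ) - j = n + i - j + 1 := by push_cast; ring
  rw [h₂, h₁, ← hcoeff, qFib_add_two hq (mul_ne_zero (pow_ne_zero j hq) hs)]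

end qFib

theorem det_qFib_pow_eq_zero_general (q x s : K) (hq : q ≠ 0) (hs : s ≠ 0)
    (k : ℕ) (n : ℤ) :
    Matrix.det (Matrix.of fun i j : Fin (k + 2) =>
      qFib q x (q ^ (j : ℕ) * s) (n + (i : ℕ) - (j : ℕ)) ^ k) = 0 := by
  let col (j : ℕ) (i : ℕ) : K := qFib q x (q ^ j * s) (n + i - j)
  let A := linRec2 (fun _ => x) (fun i => q ^ (n + i) * s) 1 0
  let B := linRec2 (fun _ => x) (fun i => q ^ (n + i) * s) 0 1
  have hcol (j i : ℕ) : col j i = col j 0 * A i + col j 1 * B i :=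
    eq_linRec2_of_rec (qFib_shift_add_two hq s hs n j) i
  have hM : (Matrix.of fun i j : Fin (k + 2) => col j i ^ k) =
      Matrix.of fun i j : Fin (k + 2) => (col j 0 * A i + col j 1 * B i) ^ k := by
    ext i j
    rw [Matrix.of_apply, Matrix.of_apply, ← hcol]
  rw [hM]
  exact Matrix.det_of_add_mul_pow_eq_zero (m := Fin (k + 2)) (by simp) (fun i => A i)
    (fun i => B i) (fun j => col j 0) (fun j => col j 1)

theorem det_qFib_pow_eq_zero (q x s : K) (hq : q ≠ 0) (hs : s ≠ 0)
    (k : ℕ) (hk : 1 ≤ k) (n : ℤ) :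
    Matrix.det (Matrix.of fun i j : Fin (k + 2) =>
      qFib q x (q ^ (j : ℕ) * s) (n + (i : ℕ) - (j : ℕ)) ^ k) = 0 :=
  det_qFib_pow_eq_zero_general q x s hq hs k n
end
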